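/- arXiv:1611.10146 — 4 statements merged into one kernel-verified Lean document; each statement's English description precedes it below -/
import Mathlib

section
/- Let x and y be bit-vectors of width 2w, each partitioned into two blocks of width w: x = x₂ ++ x₁ and y = y₂ ++ y₁ (with x₁, y₁ the low blocks). Then the zero-extended product of x and y to width 4w equals the sum of the four suitably shifted zero-extended partial products: [x*y] = zeroExt(x₁*y₁) + (zeroExt(x₂*y₁) <<< w) + (zeroExt(x₁*y₂) <<< w) + (zeroExt(x₂*y₂) <<< 2w), where each partial product xᵢ*yⱼ is computed as the width-2w product of the zero-extensions of xᵢ and yⱼ, and all terms are zero-extended to width 4w before shifting and adding. -/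
/-!
In the ring `BitVec (4 * w)` everything becomes polynomial in `t = 2 ^ w`: concatenation is
`hi * t + lo` because the two blocks occupy disjoint bits, each partial product is exact at
width `2 * w` and so survives truncation, and shifting by `w` or `2 * w` multiplies by `t` or
`t ^ 2`. What remains is a commutative-ring identity.
-/

namespace BitVec

theorem setWidth_append_eq_shiftLeft_setWidth_add {v w : ℕ} (m : ℕ) (hi : BitVec v)
    (lo : BitVec w) :
    setWidth m (hi ++ lo) = setWidth m hi <<< w + setWidth m lo := by
  rw [setWidth_append_eq_shiftLeft_setWidth_or, add_eq_or_of_and_eq_zero]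
  ext i
  simpa using fun hwi _ => lo.getLsbD_of_ge i hwi

theorem setWidth_mul_setWidth_of_add_le {n l k : ℕ} (m : ℕ) (a : BitVec n) (b : BitVec l)
    (h : n + l ≤ k) :
    setWidth m (setWidth k a * setWidth k b) = setWidth m a * setWidth m b := by
  have hab : a.toNat * b.toNat < 2 ^ k :=
    calc a.toNat * b.toNat < 2 ^ n * 2 ^ l := Nat.mul_lt_mul'' a.isLt b.isLt
      _ = 2 ^ (n + l) := (pow_add 2 n l).symm
      _ ≤ 2 ^ k := Nat.pow_le_pow_right two_pos h
  apply eq_of_toNat_eq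
  simp only [toNat_setWidth, toNat_mul]
  rw [Nat.mod_eq_of_lt (a.toNat_lt_twoPow_of_le (by omega)),
    Nat.mod_eq_of_lt (b.toNat_lt_twoPow_of_le (by omega)), Nat.mod_eq_of_lt hab, Nat.mul_mod]

end BitVec

/-- Correctness of the long-multiplication decomposition into two blocks:
the product of `x = x₂ ++ x₁` and `y = y₂ ++ y₁` (zero-extended to width
`4w`) is the sum of the four suitably shifted zero-extended exact partial
products, each computed at width `2w`. -/
theorem long_mult_two_blocks (w : ℕ) (x₁ x₂ y₁ y₂ : BitVec w) :
    BitVec.zeroExtend (4 * w) (x₂ ++ x₁) * BitVec.zeroExtend (4 * w) (y₂ ++ y₁) =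
      BitVec.zeroExtend (4 * w)
          (BitVec.zeroExtend (2 * w) x₁ * BitVec.zeroExtend (2 * w) y₁)
      + (BitVec.zeroExtend (4 * w)
          (BitVec.zeroExtend (2 * w) x₂ * BitVec.zeroExtend (2 * w) y₁)) <<< w
      + (BitVec.zeroExtend (4 * w)
          (BitVec.zeroExtend (2 * w) x₁ * BitVec.zeroExtend (2 * w) y₂)) <<< w
      + (BitVec.zeroExtend (4 * w)
          (BitVec.zeroExtend (2 * w) x₂ * BitVec.zeroExtend (2 * w) y₂)) <<< (2 * w) := by
  have hw : w + w ≤ 2 * w := by omega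
  have hshift : BitVec.twoPow (4 * w) (2 * w) =
      BitVec.twoPow (4 * w) w * BitVec.twoPow (4 * w) w := by
    rw [BitVec.twoPow_mul_twoPow_eq, two_mul]
  simp only [BitVec.setWidth_append_eq_shiftLeft_setWidth_add,
    BitVec.setWidth_mul_setWidth_of_add_le _ _ _ hw, BitVec.shiftLeft_eq_mul_twoPow, hshift]
  ring
end

section
/- Let x and y be bit-vectors partitioned into k blocks of width w each, so x = Σᵢ (zeroExt(xᵢ) <<< (i·w)) and similarly for y, with indices i from 0 to k-1. Then the zero-extended product of x and y to width 2kw equals Σᵢ Σⱼ (zeroExt of the exact 2w-bit partial product xᵢ*yⱼ, extended to width 2kw) <<< ((i+j)·w). -/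
section Aux

private lemma digit_decomp (w : ℕ) :
    ∀ k n : ℕ, n < 2 ^ (k * w) →
      n = ∑ i ∈ Finset.range k, (n / 2 ^ (i * w) % 2 ^ w) * 2 ^ (i * w) := by
  intro k
  induction k with
  | zero => intro n h; simpa using Nat.lt_one_iff.mp (by simpa using h)
  | succ k ih =>
    intro n h
    have hm : n / 2 ^ w < 2 ^ (k * w) := by
      apply Nat.div_lt_of_lt_mul
      calc n < 2 ^ ((k + 1) * w) := h
        _ = 2 ^ w * 2 ^ (k * w) := by ring
    have hrec := ih (n / 2 ^ w) hm
    rw [Finset.sum_range_succ']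
    have hdiv : ∀ i : ℕ, n / 2 ^ ((i + 1) * w) = (n / 2 ^ w) / 2 ^ (i * w) := by
      intro i
      rw [Nat.div_div_eq_div_mul, ← pow_add]
      ring_nf
    calc n = n % 2 ^ w + (n / 2 ^ w) * 2 ^ w := (Nat.mod_add_div' n (2 ^ w)).symm
      _ = n % 2 ^ w + (∑ i ∈ Finset.range k,
            ((n / 2 ^ w) / 2 ^ (i * w) % 2 ^ w) * 2 ^ (i * w)) * 2 ^ w := by rw [← hrec]
      _ = (∑ i ∈ Finset.range k,
            (n / 2 ^ ((i + 1) * w) % 2 ^ w) * 2 ^ ((i + 1) * w)) + n / 2 ^ (0 * w) % 2 ^ w * 2 ^ (0 * w) := by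
        have h0 : n / 2 ^ (0 * w) % 2 ^ w * 2 ^ (0 * w) = n % 2 ^ w := by simp
        rw [h0, Finset.sum_mul, add_comm]
        congr 1
        apply Finset.sum_congr rfl
        intro i _
        rw [hdiv, mul_assoc, ← pow_add]
        ring_nf

private lemma cast_bv_sum {n : ℕ} {ι : Type*} (s : Finset ι) (f : ι → BitVec n) :
    (((∑ i ∈ s, f i).toNat : ℕ) : ZMod (2 ^ n)) = ∑ i ∈ s, ((f i).toNat : ZMod (2 ^ n)) := by
  induction s using Finset.cons_induction with
  | empty => simp
  | cons a s ha ih =>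
    rw [Finset.sum_cons, Finset.sum_cons, BitVec.toNat_add, ZMod.natCast_mod, Nat.cast_add, ih]

private lemma toNat_extract {n : ℕ} (s l : ℕ) (x : BitVec n) :
    (x.extractLsb' s l).toNat = x.toNat / 2 ^ s % 2 ^ l := by
  simp [BitVec.extractLsb', Nat.shiftRight_eq_div_pow]

end Aux

/-- General correctness of long multiplication: for `x, y : BitVec (k*w)`
split into `k` blocks of width `w`, the product zero-extended to width
`2kw` equals the double sum of all exact `2w`-bit partial products of
blocks, zero-extended to width `2kw` and shifted by `(i+j)·w`. -/
theorem long_mult_general (k w : ℕ) (x y : BitVec (k * w)) :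
    BitVec.zeroExtend (2 * (k * w)) x * BitVec.zeroExtend (2 * (k * w)) y =
      ∑ i ∈ Finset.range k, ∑ j ∈ Finset.range k,
        (BitVec.zeroExtend (2 * (k * w))
            (BitVec.zeroExtend (2 * w) (x.extractLsb' (i * w) w) *
             BitVec.zeroExtend (2 * w) (y.extractLsb' (j * w) w))) <<< ((i + j) * w) := by
  set N := 2 * (k * w) with hN
  haveI : NeZero (2 ^ N) := ⟨by positivity⟩
  -- injectivity via ZMod
  have hinj : ∀ a b : BitVec N, ((a.toNat : ZMod (2 ^ N)) = (b.toNat : ZMod (2 ^ N))) → a = b := by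
    intro a b h
    apply BitVec.eq_of_toNat_eq
    have := congrArg ZMod.val h
    rwa [ZMod.val_natCast, ZMod.val_natCast, Nat.mod_eq_of_lt a.isLt,
      Nat.mod_eq_of_lt b.isLt] at this
  apply hinj
  -- the key Nat identity
  have key : x.toNat * y.toNat =
      ∑ i ∈ Finset.range k, ∑ j ∈ Finset.range k,
        (x.toNat / 2 ^ (i * w) % 2 ^ w) * (y.toNat / 2 ^ (j * w) % 2 ^ w) * 2 ^ ((i + j) * w) := by
    conv_lhs => rw [digit_decomp w k x.toNat x.isLt, digit_decomp w k y.toNat y.isLt]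
    rw [Finset.sum_mul_sum]
    apply Finset.sum_congr rfl; intro i _
    apply Finset.sum_congr rfl; intro j _
    rw [show (i + j) * w = i * w + j * w by ring, pow_add]
    ring
  -- left side
  have hL : (((BitVec.zeroExtend N x * BitVec.zeroExtend N y).toNat : ℕ) : ZMod (2 ^ N)) =
      ((x.toNat * y.toNat : ℕ) : ZMod (2 ^ N)) := by
    rw [BitVec.toNat_mul]
    push_cast [ZMod.natCast_mod, BitVec.toNat_setWidth]
    ring
  rw [hL, key, cast_bv_sum]
  push_cast
  apply Finset.sum_congr rfl; intro i _
  rw [cast_bv_sum]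
  apply Finset.sum_congr rfl; intro j _
  -- each term
  have hw2 : 2 ^ w ≤ 2 ^ (2 * w) := Nat.pow_le_pow_right (by norm_num) (by omega)
  have hxi : (x.extractLsb' (i * w) w).toNat < 2 ^ w := (x.extractLsb' (i * w) w).isLt
  have hyj : (y.extractLsb' (j * w) w).toNat < 2 ^ w := (y.extractLsb' (j * w) w).isLt
  have hprod : (x.extractLsb' (i * w) w).toNat * (y.extractLsb' (j * w) w).toNat < 2 ^ (2 * w) := by
    calc (x.extractLsb' (i * w) w).toNat * (y.extractLsb' (j * w) w).toNat
        < 2 ^ w * 2 ^ w := Nat.mul_lt_mul_of_lt_of_lt hxi hyj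
      _ = 2 ^ (2 * w) := by rw [← pow_add]; ring_nf
  rw [BitVec.toNat_shiftLeft, BitVec.toNat_setWidth, BitVec.toNat_mul,
    BitVec.toNat_setWidth, BitVec.toNat_setWidth,
    Nat.mod_eq_of_lt (lt_of_lt_of_le hxi hw2), Nat.mod_eq_of_lt (lt_of_lt_of_le hyj hw2),
    Nat.mod_eq_of_lt hprod, Nat.shiftLeft_eq,
    toNat_extract, toNat_extract]
  push_cast [ZMod.natCast_mod]
  ring
end

section
/- Let w ≥ 1 and let v₁, v₂, u₁, u₂ be bit-vectors of width w. The long-multiplication partial products of (v₂ ++ 0^w ++ v₂) with (0^w ++ v₁ ++ v₁) coincide, as a multiset of shifted terms, with those of (v₁ ++ 0^w ++ v₁) with (0^w ++ v₂ ++ v₂); in particular, the two products are equal: [(v₂ ++ 0^w ++ v₂) * (0^w ++ v₁ ++ v₁)] = [(v₁ ++ 0^w ++ v₁) * (0^w ++ v₂ ++ v₂)], where [·*·] denotes the zero-extended product at width 6w. -/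
/-!
Read as natural numbers, `v ++ 0^w ++ v = v * (2^(2w) + 1)` and `0^w ++ v ++ v = v * (2^w + 1)`.
Both products are therefore `v₁ * v₂ * (2^(2w) + 1) * (2^w + 1)` reduced modulo `2^(6w)`.
-/

namespace BitVec

theorem toNat_append_eq_mul_add {m n : ℕ} (x : BitVec m) (y : BitVec n) :
    (x ++ y).toNat = x.toNat * 2 ^ n + y.toNat := by
  rw [toNat_append, ← Nat.shiftLeft_add_eq_or_of_lt y.isLt, Nat.shiftLeft_eq]

theorem toNat_append_zero_append_self {w : ℕ} (x : BitVec w) :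
    (x ++ 0#w ++ x).toNat = x.toNat * (2 ^ (2 * w) + 1) := by
  simp only [toNat_append_eq_mul_add, toNat_ofNat, Nat.zero_mod, Nat.add_zero]
  ring

theorem toNat_zero_append_self_append_self {w : ℕ} (x : BitVec w) :
    (0#w ++ x ++ x).toNat = x.toNat * (2 ^ w + 1) := by
  simp only [toNat_append_eq_mul_add, toNat_ofNat, Nat.zero_mod, Nat.zero_mul, Nat.zero_add]
  ring

theorem setWidth_mul_setWidth_eq_of_toNat_mul_eq {m n : ℕ} (k : ℕ) {a b : BitVec m}
    {c d : BitVec n} (h : a.toNat * b.toNat = c.toNat * d.toNat) :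
    setWidth k a * setWidth k b = setWidth k c * setWidth k d := by
  apply eq_of_toNat_eq
  simp only [toNat_mul, toNat_setWidth, ← Nat.mul_mod, h]

end BitVec

theorem ambiguous_partial_products_general (w : ℕ) (v₁ v₂ : BitVec w) :
    BitVec.zeroExtend (6 * w) (v₂ ++ (0#w) ++ v₂) *
        BitVec.zeroExtend (6 * w) ((0#w) ++ v₁ ++ v₁) =
      BitVec.zeroExtend (6 * w) (v₁ ++ (0#w) ++ v₁) *
        BitVec.zeroExtend (6 * w) ((0#w) ++ v₂ ++ v₂) := by
  apply BitVec.setWidth_mul_setWidth_eq_of_toNat_mul_eq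
  rw [BitVec.toNat_append_zero_append_self, BitVec.toNat_append_zero_append_self,
    BitVec.toNat_zero_append_self_append_self, BitVec.toNat_zero_append_self_append_self]
  ring

/-- Example 3 of the paper: the operand pairs
`(v₂ ++ 0^w ++ v₂, 0^w ++ v₁ ++ v₁)` and `(v₁ ++ 0^w ++ v₁, 0^w ++ v₂ ++ v₂)`
yield identical shifted partial products; in particular their
zero-extended products at width `6w` are equal. -/
theorem ambiguous_partial_products (w : ℕ) (hw : 1 ≤ w) (v₁ v₂ u₁ u₂ : BitVec w) :
    BitVec.zeroExtend (6 * w) (v₂ ++ (0#w) ++ v₂) *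
        BitVec.zeroExtend (6 * w) ((0#w) ++ v₁ ++ v₁) =
      BitVec.zeroExtend (6 * w) (v₁ ++ (0#w) ++ v₁) *
        BitVec.zeroExtend (6 * w) ((0#w) ++ v₂ ++ v₂) :=
  ambiguous_partial_products_general w v₁ v₂
end

section
/- For x y : BitVec w and the 2w-bit product p = zeroExt(x) * zeroExt(y), bit i of p (for i < 2w) equals the low bit of Σ_{j+k=i, j<w, k<w} (toNat (x.getBit j) * toNat (y.getBit k)) + c_i, where c_i is the carry into column i defined recursively by c_0 = 0 and c_{i+1} = (Σ_{j+k=i} toNat(x.getBit j ∧ y.getBit k) + c_i) / 2; i.e., schoolbook bitwise multiplication via column sums of single-bit partial products x_j ∧ y_k is correct. -/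
/-- The sum of the single-bit partial products of `x` and `y` aligned at
output column `i`. -/
def colSum (w : ℕ) (x y : BitVec w) (i : ℕ) : ℕ :=
  ∑ j ∈ Finset.range w, ∑ k ∈ Finset.range w,
    if j + k = i then (x.getLsbD j).toNat * (y.getLsbD k).toNat else 0

/-- The carry into column `i` of schoolbook bitwise multiplication. -/
def carryInto (w : ℕ) (x y : BitVec w) : ℕ → ℕ
  | 0 => 0
  | i + 1 => (colSum w x y i + carryInto w x y i) / 2

lemma nat_eq_sum_testBit (w n : ℕ) (h : n < 2 ^ w) :
    n = ∑ j ∈ Finset.range w, (n.testBit j).toNat * 2 ^ j := by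
  induction w generalizing n with
  | zero => simpa using h
  | succ w ih =>
    rw [Finset.sum_range_succ']
    have h2 : n / 2 < 2 ^ w := by
      rw [pow_succ] at h; omega
    have hih := ih (n / 2) h2
    have hb : (n.testBit 0).toNat = n % 2 := by
      rcases Nat.mod_two_eq_zero_or_one n with h0 | h0 <;>
        simp [Nat.testBit_zero, Nat.mod_two_eq_one_iff_testBit_zero.symm, h0]
    simp only [Nat.testBit_succ, pow_succ, ← mul_assoc, ← Finset.sum_mul, ← hih, hb, pow_zero,
      mul_one]
    omega

lemma carryInto_eq (w : ℕ) (x y : BitVec w) (i : ℕ) :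
    carryInto w x y i = (∑ t ∈ Finset.range i, colSum w x y t * 2 ^ t) / 2 ^ i := by
  induction i with
  | zero => simp [carryInto]
  | succ i ih =>
    rw [carryInto, ih, Finset.sum_range_succ, pow_succ, ← Nat.div_div_eq_div_mul,
      Nat.add_mul_div_right _ _ (pow_pos (by norm_num : (0:ℕ) < 2) i),
      add_comm (colSum w x y i)]

lemma prod_eq_sum_colSum (w : ℕ) (x y : BitVec w) :
    x.toNat * y.toNat = ∑ t ∈ Finset.range (2 * w), colSum w x y t * 2 ^ t := by
  have hx := nat_eq_sum_testBit w x.toNat x.isLt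
  have hy := nat_eq_sum_testBit w y.toNat y.isLt
  unfold colSum
  simp only [Finset.sum_mul, ite_mul, zero_mul]
  rw [Finset.sum_comm]
  refine Eq.trans ?_ (Finset.sum_congr rfl fun j _ => Finset.sum_comm)
  conv_lhs => rw [hx, hy]
  rw [Finset.sum_mul_sum]
  refine Finset.sum_congr rfl fun j hj => Finset.sum_congr rfl fun k hk => ?_
  rw [Finset.sum_ite_eq (Finset.range (2 * w)) (j + k)
    (fun t => (x.getLsbD j).toNat * (y.getLsbD k).toNat * 2 ^ t)]
  simp only [Finset.mem_range] at hj hk ⊢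
  rw [if_pos (by omega)]
  simp only [BitVec.getLsbD, pow_add]
  ring

/-- Schoolbook bitwise multiplication via column sums of single-bit partial
products is correct: bit `i` of the exact `2w`-bit product is the low bit
of the column sum plus the incoming carry. -/
theorem wallace_column_correct (w : ℕ) (x y : BitVec w) (i : ℕ) (hi : i < 2 * w) :
    (BitVec.zeroExtend (2 * w) x * BitVec.zeroExtend (2 * w) y).getLsbD i =
      (colSum w x y i + carryInto w x y i).testBit 0 := by
  set N := x.toNat * y.toNat with hN
  have hlt : N < 2 ^ (2 * w) := by
    have := Nat.mul_lt_mul_of_lt_of_lt x.isLt y.isLt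
    rwa [← pow_add, ← two_mul] at this
  have hx' : x.toNat % 2 ^ (2 * w) = x.toNat :=
    Nat.mod_eq_of_lt (lt_of_lt_of_le x.isLt (Nat.pow_le_pow_right (by norm_num) (by omega)))
  have hy' : y.toNat % 2 ^ (2 * w) = y.toNat :=
    Nat.mod_eq_of_lt (lt_of_lt_of_le y.isLt (Nat.pow_le_pow_right (by norm_num) (by omega)))
  have hget : (BitVec.zeroExtend (2 * w) x * BitVec.zeroExtend (2 * w) y).getLsbD i
      = N.testBit i := by
    rw [BitVec.getLsbD, BitVec.toNat_mul, BitVec.toNat_setWidth, BitVec.toNat_setWidth,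
      hx', hy', ← hN, Nat.mod_eq_of_lt hlt]
  rw [hget]
  have hsplit : N = (∑ t ∈ Finset.range i, colSum w x y t * 2 ^ t)
      + colSum w x y i * 2 ^ i
      + ∑ t ∈ Finset.Ico (i + 1) (2 * w), colSum w x y t * 2 ^ t := by
    rw [hN, prod_eq_sum_colSum, Finset.range_eq_Ico,
      ← Finset.sum_Ico_consecutive _ (Nat.zero_le (i + 1)) (by omega : i + 1 ≤ 2 * w),
      ← Finset.range_eq_Ico, Finset.sum_range_succ]
  have hdvd : 2 ^ (i + 1) ∣ ∑ t ∈ Finset.Ico (i + 1) (2 * w), colSum w x y t * 2 ^ t :=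
    Finset.dvd_sum fun t ht => Dvd.dvd.mul_left
      (pow_dvd_pow 2 (Finset.mem_Ico.mp ht).1) _
  obtain ⟨r, hr⟩ := hdvd
  set A := ∑ t ∈ Finset.range i, colSum w x y t * 2 ^ t with hA
  have hNdiv : N / 2 ^ i = A / 2 ^ i + (colSum w x y i + 2 * r) := by
    rw [hsplit, hr, pow_succ]
    have : A + colSum w x y i * 2 ^ i + 2 ^ i * 2 * r
        = A + (colSum w x y i + 2 * r) * 2 ^ i := by ring
    rw [this, Nat.add_mul_div_right _ _ (pow_pos (by norm_num : (0:ℕ) < 2) i)]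
  rw [Nat.testBit_eq_decide_div_mod_eq, Nat.testBit_eq_decide_div_mod_eq, pow_zero, Nat.div_one, hNdiv,
    carryInto_eq, ← hA]
  set q := A / 2 ^ i
  have hm : (q + (colSum w x y i + 2 * r)) % 2 = (colSum w x y i + q) % 2 := by omega
  rw [hm]
end
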